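/- arXiv:1611.02050 — 4 statements merged into one kernel-verified Lean document; each statement's English description precedes it below -/
import Mathlib

section
/- Let H ∈ ℝ^{n×n} with σ̄(H) < 1, where σ̄(H) is the largest singular value (ℓ² operator norm) of H. Let {x̃_t}, {w̄_t} ⊂ ℝⁿ satisfy x̃_{t+1} = H x̃_t + w̄_t for all t ≥ 0. Define b = 1/(1 − σ̄(H)²) and c = (1 + σ̄(H)²)/(1 − σ̄(H)²)³. Then for every T ≥ 1, Σ_{t=0}^{T−1} ‖x̃_t‖² ≤ 2 b ‖x̃_0‖² + 4 c Σ_{t=0}^{T−1} ‖w̄_t‖², where ‖·‖ is the Euclidean norm. -/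
open Matrix
open scoped Matrix.Norms.L2Operator

/-- The largest singular value of a real matrix, i.e. its `ℓ²` operator norm. -/
noncomputable def sbar {m n : ℕ} (M : Matrix (Fin m) (Fin n) ℝ) : ℝ := ‖M‖

/-- If `σ̄(H) < 1` and `x̃_{t+1} = H x̃_t + w̄_t` for all `t`, then for every `T ≥ 1`,
`Σ_{t<T} ‖x̃_t‖² ≤ 2 b ‖x̃_0‖² + 4 c Σ_{t<T} ‖w̄_t‖²`, where `b = 1/(1 − σ̄(H)²)` and
`c = (1 + σ̄(H)²)/(1 − σ̄(H)²)³`. Squared Euclidean norms are written as dot products. -/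
theorem cumulative_state_error_bound {n : ℕ}
    (H : Matrix (Fin n) (Fin n) ℝ) (hH : sbar H < 1)
    (xt w : ℕ → Fin n → ℝ)
    (hrec : ∀ t : ℕ, xt (t + 1) = H.mulVec (xt t) + w t)
    (T : ℕ) (hT : 1 ≤ T) :
    ∑ t ∈ Finset.range T, xt t ⬝ᵥ xt t ≤
      2 * (1 / (1 - sbar H ^ 2)) * (xt 0 ⬝ᵥ xt 0)
        + 4 * ((1 + sbar H ^ 2) / (1 - sbar H ^ 2) ^ 3) *
            ∑ t ∈ Finset.range T, w t ⬝ᵥ w t := by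
  set s : ℝ := sbar H with hs
  have hs0 : 0 ≤ s := norm_nonneg _
  have hD : 0 < 1 - s ^ 2 := by nlinarith
  set E : (Fin n → ℝ) → EuclideanSpace ℝ (Fin n) :=
    fun v => (WithLp.equiv 2 (Fin n → ℝ)).symm v with hE
  have hdot : ∀ v : Fin n → ℝ, v ⬝ᵥ v = ‖E v‖ ^ 2 := by
    intro v
    rw [EuclideanSpace.norm_eq, Real.sq_sqrt (by positivity)]
    simp [dotProduct, hE, sq]
  set q : ℕ → ℝ := fun t => ‖E (xt t)‖ with hq
  set u : ℕ → ℝ := fun t => ‖E (w t)‖ with hu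
  have hqn : ∀ t, 0 ≤ q t := fun t => norm_nonneg _
  have hun : ∀ t, 0 ≤ u t := fun t => norm_nonneg _
  have hstep : ∀ t, q (t + 1) ≤ s * q t + u t := by
    intro t
    have h1 : ‖E (H.mulVec (xt t))‖ ≤ s * q t := H.l2_opNorm_mulVec (E (xt t))
    calc q (t + 1) = ‖E (H.mulVec (xt t)) + E (w t)‖ := by
          show ‖E (xt (t + 1))‖ = _
          rw [hrec t]
          rfl
      _ ≤ ‖E (H.mulVec (xt t))‖ + ‖E (w t)‖ := norm_add_le _ _
      _ ≤ s * q t + u t := by gcongr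
  have key : ∀ t, (1 - s ^ 2) * q (t + 1) ^ 2 ≤
      (1 - s ^ 2) * (1 + s ^ 2) / 2 * q t ^ 2 + (1 + s ^ 2) * u t ^ 2 := by
    intro t
    have h2 : q (t + 1) ^ 2 ≤ (s * q t + u t) ^ 2 := by
      apply pow_le_pow_left₀ (hqn _) (hstep t)
    nlinarith [sq_nonneg ((1 - s ^ 2) * q t - 2 * s * u t), hqn t, hun t]
  have claim : ∀ M : ℕ, (1 - s ^ 2) ^ 2 / 2 * ∑ t ∈ Finset.range M, q t ^ 2 ≤
      (1 - s ^ 2) * q 0 ^ 2 + (1 + s ^ 2) * ∑ t ∈ Finset.range M, u t ^ 2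
        - (1 - s ^ 2) * q M ^ 2 := by
    intro M
    induction M with
    | zero => simp
    | succ M ih =>
        rw [Finset.sum_range_succ, Finset.sum_range_succ]
        have := key M
        nlinarith [sq_nonneg (q M)]
  have hc := claim T
  have hqT : 0 ≤ (1 - s ^ 2) * q T ^ 2 := by positivity
  have hQ : ∑ t ∈ Finset.range T, xt t ⬝ᵥ xt t = ∑ t ∈ Finset.range T, q t ^ 2 := by
    exact Finset.sum_congr rfl fun t _ => hdot _
  have hW : ∑ t ∈ Finset.range T, w t ⬝ᵥ w t = ∑ t ∈ Finset.range T, u t ^ 2 := by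
    exact Finset.sum_congr rfl fun t _ => hdot _
  rw [hQ, hW, hdot]
  set Q := ∑ t ∈ Finset.range T, q t ^ 2 with hQd
  set W := ∑ t ∈ Finset.range T, u t ^ 2 with hWd
  have hWn : 0 ≤ W := Finset.sum_nonneg fun t _ => sq_nonneg _
  have h2 : Q ≤ 2 / (1 - s ^ 2) ^ 2 * ((1 - s ^ 2) * q 0 ^ 2 + (1 + s ^ 2) * W) := by
    rw [div_mul_eq_mul_div, le_div_iff₀ (by positivity)]
    linarith
  have e1 : 2 / (1 - s ^ 2) ^ 2 * ((1 - s ^ 2) * q 0 ^ 2) = 2 * (1 / (1 - s ^ 2)) * q 0 ^ 2 := by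
    field_simp
  have e3 : 2 / (1 - s ^ 2) ^ 2 * ((1 - s ^ 2) * q 0 ^ 2 + (1 + s ^ 2) * W) =
      2 * (1 / (1 - s ^ 2)) * q 0 ^ 2 + 2 * (1 + s ^ 2) / (1 - s ^ 2) ^ 2 * W := by
    field_simp
  have hcoef : 2 * (1 + s ^ 2) / (1 - s ^ 2) ^ 2 ≤ 4 * ((1 + s ^ 2) / (1 - s ^ 2) ^ 3) := by
    have h4 : 4 * ((1 + s ^ 2) / (1 - s ^ 2) ^ 3) = 4 * (1 + s ^ 2) / (1 - s ^ 2) ^ 3 := by ring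
    rw [h4, div_le_div_iff₀ (by positivity) (by positivity)]
    nlinarith [sq_nonneg s, sq_nonneg (1 - s ^ 2), mul_pos hD hD]
  have := mul_le_mul_of_nonneg_right hcoef hWn
  linarith
end

section
/- Let A ∈ ℝ^{n×n} be invertible, C ∈ ℝ^{p×n}, V ∈ ℝ^{p×p} positive definite, Q ∈ ℝ^{n×n} positive semidefinite, Σ ∈ ℝ^{n×n} positive definite, and Σ' = A(Σ⁻¹ + CᵀV⁻¹C)⁻¹Aᵀ + Q. Given x̂, x̄, x̄' ∈ ℝⁿ and y ∈ ℝᵖ, define the updated estimate x̂' = A x̂ + A(Σ⁻¹ + CᵀV⁻¹C)⁻¹CᵀV⁻¹(y − C x̂), and set x̃ = x̄ − x̂, x̃' = x̄' − x̂'. Then for every α > 0: x̃'ᵀ Σ'⁻¹ x̃' ≤ (1 + 1/α)[ x̃ᵀ Σ⁻¹ x̃ + (y − C x̄)ᵀ V⁻¹ (y − C x̄) − (y − C x̂)ᵀ (V + C Σ Cᵀ)⁻¹ (y − C x̂) ] + (1 + α) (x̄' − A x̄)ᵀ Σ'⁻¹ (x̄' − A x̄). -/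
open Matrix

variable {n p : ℕ}

/-- Move a matrix across a dot product. -/
lemma kalman_mv_dot (M : Matrix (Fin p) (Fin n) ℝ) (x : Fin n → ℝ) (y : Fin p → ℝ) :
    (M *ᵥ x) ⬝ᵥ y = x ⬝ᵥ (Mᵀ *ᵥ y) := by
  rw [dotProduct_mulVec, vecMul_transpose, dotProduct_comm]

/-- Symmetric matrices give symmetric quadratic forms. -/
lemma kalman_sym_dot {M : Matrix (Fin n) (Fin n) ℝ} (h : Mᵀ = M) (x y : Fin n → ℝ) :
    x ⬝ᵥ M *ᵥ y = y ⬝ᵥ M *ᵥ x := by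
  conv_lhs => rw [← h]
  rw [← kalman_mv_dot, dotProduct_comm]

lemma kalman_transpose_eq {M : Matrix (Fin n) (Fin n) ℝ} (h : M.IsHermitian) : Mᵀ = M := by
  have := h.eq
  rwa [Matrix.conjTranspose_eq_transpose_of_trivial] at this

lemma kalman_psd_nonneg {M : Matrix (Fin n) (Fin n) ℝ} (h : M.PosSemidef) (x : Fin n → ℝ) :
    0 ≤ x ⬝ᵥ M *ᵥ x := by
  simpa using h.dotProduct_mulVec_nonneg x

/-- Young-type inequality for PSD quadratic forms. -/
lemma kalman_young {M : Matrix (Fin n) (Fin n) ℝ} (hM : M.PosSemidef) (a b : Fin n → ℝ)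
    {α : ℝ} (hα : 0 < α) :
    (a + b) ⬝ᵥ M *ᵥ (a + b) ≤ (1 + 1/α) * (a ⬝ᵥ M *ᵥ a) + (1 + α) * (b ⬝ᵥ M *ᵥ b) := by
  have hsym := kalman_transpose_eq hM.isHermitian
  have h0 := kalman_psd_nonneg hM (a - α • b)
  have hab : a ⬝ᵥ M *ᵥ b = b ⬝ᵥ M *ᵥ a := kalman_sym_dot hsym a b
  have hexp : (a - α • b) ⬝ᵥ M *ᵥ (a - α • b)
      = a ⬝ᵥ M *ᵥ a - 2 * α * (a ⬝ᵥ M *ᵥ b) + α^2 * (b ⬝ᵥ M *ᵥ b) := by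
    simp only [Matrix.mulVec_sub, Matrix.mulVec_smul, dotProduct_sub, sub_dotProduct,
      dotProduct_smul, smul_dotProduct, smul_eq_mul, hab]
    ring
  rw [hexp] at h0
  have hexp2 : (a + b) ⬝ᵥ M *ᵥ (a + b)
      = a ⬝ᵥ M *ᵥ a + 2 * (a ⬝ᵥ M *ᵥ b) + b ⬝ᵥ M *ᵥ b := by
    simp only [Matrix.mulVec_add, dotProduct_add, add_dotProduct, hab]
    ring
  rw [hexp2, ← mul_le_mul_iff_right₀ hα]
  have hc : α * ((1 + 1/α) * (a ⬝ᵥ M *ᵥ a) + (1 + α) * (b ⬝ᵥ M *ᵥ b))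
      = α * (a ⬝ᵥ M *ᵥ a) + a ⬝ᵥ M *ᵥ a + α * (b ⬝ᵥ M *ᵥ b) + α^2 * (b ⬝ᵥ M *ᵥ b) := by
    field_simp
    ring
  rw [hc]
  nlinarith [h0]

/-- Inverse-monotonicity on quadratic forms: adding a PSD matrix shrinks the inverse form. -/
lemma kalman_inv_mono {B Q : Matrix (Fin n) (Fin n) ℝ} (hB : B.PosDef) (hQ : Q.PosSemidef)
    (x : Fin n → ℝ) : x ⬝ᵥ (B + Q)⁻¹ *ᵥ x ≤ x ⬝ᵥ B⁻¹ *ᵥ x := by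
  set M := B + Q with hMdef
  have hM : M.PosDef := hB.add_posSemidef hQ
  have hBd : IsUnit B.det := isUnit_iff_ne_zero.mpr hB.det_pos.ne'
  have hMd : IsUnit M.det := isUnit_iff_ne_zero.mpr hM.det_pos.ne'
  have hQeq : Q = M - B := by rw [hMdef]; abel
  have h1 : M⁻¹ * Q * B⁻¹ = B⁻¹ - M⁻¹ := by
    rw [hQeq, Matrix.mul_sub, Matrix.sub_mul, Matrix.nonsing_inv_mul M hMd, Matrix.one_mul,
      Matrix.mul_assoc, Matrix.mul_nonsing_inv B hBd, Matrix.mul_one]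
  have h2 : B⁻¹ * Q * M⁻¹ = B⁻¹ - M⁻¹ := by
    rw [hQeq, Matrix.mul_sub, Matrix.sub_mul, Matrix.mul_assoc,
      Matrix.mul_nonsing_inv M hMd, Matrix.mul_one, Matrix.nonsing_inv_mul B hBd, Matrix.one_mul]
  have hkey : B⁻¹ - M⁻¹ = M⁻¹ * Q * M⁻¹ + M⁻¹ * Q * (B⁻¹ * Q * M⁻¹) := by
    calc B⁻¹ - M⁻¹ = M⁻¹ * Q * B⁻¹ := h1.symm
      _ = M⁻¹ * Q * (M⁻¹ + (B⁻¹ - M⁻¹)) := by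
          rw [show M⁻¹ + (B⁻¹ - M⁻¹) = B⁻¹ by abel]
      _ = M⁻¹ * Q * (M⁻¹ + B⁻¹ * Q * M⁻¹) := by rw [h2]
      _ = M⁻¹ * Q * M⁻¹ + M⁻¹ * Q * (B⁻¹ * Q * M⁻¹) := by rw [Matrix.mul_add]
  have hps1 : (M⁻¹ * Q * M⁻¹).PosSemidef := by
    have := hQ.conjTranspose_mul_mul_same M⁻¹
    rwa [hM.inv.isHermitian.eq] at this
  have hps2 : (M⁻¹ * Q * (B⁻¹ * Q * M⁻¹)).PosSemidef := by
    have := hB.inv.posSemidef.conjTranspose_mul_mul_same (Q * M⁻¹)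
    have hct : (Q * M⁻¹)ᴴ = M⁻¹ * Q := by
      rw [Matrix.conjTranspose_mul, hM.inv.isHermitian.eq, hQ.isHermitian.eq]
    rw [hct] at this
    simpa only [Matrix.mul_assoc] using this
  have hsum := (hps1.add hps2)
  rw [← hkey] at hsum
  have := kalman_psd_nonneg hsum x
  rw [Matrix.sub_mulVec, dotProduct_sub] at this
  linarith

/-- Conjugation by an invertible matrix preserves positive definiteness. -/
lemma kalman_posdef_conj {M : Matrix (Fin n) (Fin n) ℝ} (hM : M.PosDef)
    (A : Matrix (Fin n) (Fin n) ℝ) (hA : IsUnit A.det) : (A * M * Aᵀ).PosDef := by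
  have hPSD : (A * M * Aᵀ).PosSemidef := by
    have := hM.posSemidef.mul_mul_conjTranspose_same A
    rwa [Matrix.conjTranspose_eq_transpose_of_trivial] at this
  refine Matrix.PosDef.of_dotProduct_mulVec_pos hPSD.isHermitian (fun x hx => ?_)
  have hxA : Aᵀ *ᵥ x ≠ 0 := by
    have hinj : Function.Injective (Aᵀ.mulVec) :=
      Matrix.mulVec_injective_iff_isUnit.mpr
        ((Matrix.isUnit_iff_isUnit_det Aᵀ).mpr (by rwa [Matrix.det_transpose]))
    intro h
    exact hx (hinj (by simpa using h))
  have hq : star x ⬝ᵥ (A * M * Aᵀ) *ᵥ x = (Aᵀ *ᵥ x) ⬝ᵥ M *ᵥ (Aᵀ *ᵥ x) := by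
    rw [show (A * M * Aᵀ) *ᵥ x = A *ᵥ (M *ᵥ (Aᵀ *ᵥ x)) by
      rw [Matrix.mulVec_mulVec, Matrix.mulVec_mulVec]]
    rw [star_trivial, dotProduct_comm, kalman_mv_dot, dotProduct_comm]
  rw [hq]
  simpa using hM.dotProduct_mulVec_pos hxA

/-- Per-step inequality behind the worst-case bound for the Kalman filter. With
`Σ' = A(Σ⁻¹ + CᵀV⁻¹C)⁻¹Aᵀ + Q` and the Kalman update
`x̂' = A x̂ + A(Σ⁻¹ + CᵀV⁻¹C)⁻¹CᵀV⁻¹(y − C x̂)`, for every `α > 0`: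
`‖x̄' − x̂'‖²_{Σ'⁻¹} ≤ (1 + 1/α)[‖x̄ − x̂‖²_{Σ⁻¹} + ‖y − Cx̄‖²_{V⁻¹}
  − (y − Cx̂)ᵀ(V + CΣCᵀ)⁻¹(y − Cx̂)] + (1 + α)‖x̄' − Ax̄‖²_{Σ'⁻¹}`. -/
theorem per_step_inequality {n p : ℕ}
    (A : Matrix (Fin n) (Fin n) ℝ) (hA : IsUnit A.det)
    (C : Matrix (Fin p) (Fin n) ℝ)
    (V : Matrix (Fin p) (Fin p) ℝ) (hV : V.PosDef)
    (Q : Matrix (Fin n) (Fin n) ℝ) (hQ : Q.PosSemidef)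
    (Sig : Matrix (Fin n) (Fin n) ℝ) (hSig : Sig.PosDef)
    (Sig' : Matrix (Fin n) (Fin n) ℝ)
    (hSig' : Sig' = A * (Sig⁻¹ + Cᵀ * V⁻¹ * C)⁻¹ * Aᵀ + Q)
    (xhat xbar xbar' : Fin n → ℝ) (y : Fin p → ℝ)
    (xhat' : Fin n → ℝ)
    (hxhat' : xhat' = A.mulVec xhat +
      (A * (Sig⁻¹ + Cᵀ * V⁻¹ * C)⁻¹ * Cᵀ * V⁻¹).mulVec (y - C.mulVec xhat))
    (α : ℝ) (hα : 0 < α) :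
    (xbar' - xhat') ⬝ᵥ Sig'⁻¹.mulVec (xbar' - xhat') ≤
      (1 + 1 / α) *
          ((xbar - xhat) ⬝ᵥ Sig⁻¹.mulVec (xbar - xhat)
            + (y - C.mulVec xbar) ⬝ᵥ V⁻¹.mulVec (y - C.mulVec xbar)
            - (y - C.mulVec xhat) ⬝ᵥ (V + C * Sig * Cᵀ)⁻¹.mulVec (y - C.mulVec xhat))
        + (1 + α) *
            ((xbar' - A.mulVec xbar) ⬝ᵥ Sig'⁻¹.mulVec (xbar' - A.mulVec xbar)) := by
  set S : Matrix (Fin n) (Fin n) ℝ := Sig⁻¹ + Cᵀ * V⁻¹ * C with hSdef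
  have hCtVC : (Cᵀ * V⁻¹ * C).PosSemidef := by
    have := hV.inv.posSemidef.conjTranspose_mul_mul_same C
    rwa [Matrix.conjTranspose_eq_transpose_of_trivial] at this
  have hS : S.PosDef := hSig.inv.add_posSemidef hCtVC
  have hSd : IsUnit S.det := isUnit_iff_ne_zero.mpr hS.det_pos.ne'
  have hSsym : Sᵀ = S := kalman_transpose_eq hS.isHermitian
  have hVsym : (V⁻¹)ᵀ = V⁻¹ := kalman_transpose_eq hV.inv.isHermitian
  have hB : (A * S⁻¹ * Aᵀ).PosDef := kalman_posdef_conj hS.inv A hA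
  have hSig'pd : Sig'.PosDef := by rw [hSig']; exact hB.add_posSemidef hQ
  -- abbreviations
  set e : Fin p → ℝ := y - C.mulVec xhat with hedef
  set t : Fin n → ℝ := xbar - xhat with htdef
  set u : Fin n → ℝ := Cᵀ *ᵥ (V⁻¹ *ᵥ e) with hudef
  set g : Fin n → ℝ := S⁻¹ *ᵥ u with hgdef
  set z : Fin n → ℝ := t - g with hzdef
  set a : Fin n → ℝ := A *ᵥ z with hadef
  set w : Fin n → ℝ := xbar' - A.mulVec xbar with hwdef
  -- decomposition
  have hAg : (A * S⁻¹ * Cᵀ * V⁻¹) *ᵥ e = A *ᵥ g := by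
    rw [hgdef, hudef]
    simp only [Matrix.mulVec_mulVec, Matrix.mul_assoc]
  have hdecomp : xbar' - xhat' = a + w := by
    rw [hadef, hzdef, htdef, hwdef, hxhat', hAg, Matrix.mulVec_sub, Matrix.mulVec_sub]
    abel
  -- Step 1: Young
  have hstep1 : (xbar' - xhat') ⬝ᵥ Sig'⁻¹ *ᵥ (xbar' - xhat') ≤
      (1 + 1/α) * (a ⬝ᵥ Sig'⁻¹ *ᵥ a) + (1 + α) * (w ⬝ᵥ Sig'⁻¹ *ᵥ w) := by
    rw [hdecomp]
    exact kalman_young hSig'pd.inv.posSemidef a w hα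
  -- Step 2: inverse monotonicity
  have hstep2 : a ⬝ᵥ Sig'⁻¹ *ᵥ a ≤ a ⬝ᵥ (A * S⁻¹ * Aᵀ)⁻¹ *ᵥ a := by
    rw [hSig']
    exact kalman_inv_mono hB hQ a
  -- Step 3: change of variables
  have hstep3 : a ⬝ᵥ (A * S⁻¹ * Aᵀ)⁻¹ *ᵥ a = z ⬝ᵥ S *ᵥ z := by
    have hBinv : (A * S⁻¹ * Aᵀ)⁻¹ = (A⁻¹)ᵀ * (S * A⁻¹) := by
      rw [Matrix.mul_inv_rev, Matrix.mul_inv_rev, Matrix.nonsing_inv_nonsing_inv S hSd,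
        ← Matrix.transpose_nonsing_inv]
    have hAz : A⁻¹ *ᵥ a = z := by
      rw [hadef, Matrix.mulVec_mulVec, Matrix.nonsing_inv_mul A hA, Matrix.one_mulVec]
    have hcollapse : (A * S⁻¹ * Aᵀ)⁻¹ *ᵥ a = (A⁻¹)ᵀ *ᵥ (S *ᵥ (A⁻¹ *ᵥ a)) := by
      rw [hBinv]
      simp only [Matrix.mulVec_mulVec, Matrix.mul_assoc]
    rw [hcollapse, ← kalman_mv_dot, hAz]
  -- Step 4: algebraic identity for the bracket
  have hSg : S *ᵥ g = u := by
    rw [hgdef, Matrix.mulVec_mulVec, Matrix.mul_nonsing_inv S hSd, Matrix.one_mulVec]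
  have htu : t ⬝ᵥ u = (C *ᵥ t) ⬝ᵥ (V⁻¹ *ᵥ e) := by
    rw [hudef, ← kalman_mv_dot]
  have h4a : z ⬝ᵥ S *ᵥ z = t ⬝ᵥ S *ᵥ t - 2 * (t ⬝ᵥ u) + u ⬝ᵥ g := by
    rw [hzdef, Matrix.mulVec_sub, hSg]
    have hgSt : g ⬝ᵥ S *ᵥ t = t ⬝ᵥ u := by rw [kalman_sym_dot hSsym, hSg]
    simp only [sub_dotProduct, dotProduct_sub]
    rw [hgSt, dotProduct_comm g u]
    ring
  have h4b : t ⬝ᵥ S *ᵥ t = t ⬝ᵥ Sig⁻¹ *ᵥ t + (C *ᵥ t) ⬝ᵥ V⁻¹ *ᵥ (C *ᵥ t) := by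
    rw [hSdef, Matrix.add_mulVec, dotProduct_add]
    congr 1
    rw [show (Cᵀ * V⁻¹ * C) *ᵥ t = Cᵀ *ᵥ (V⁻¹ *ᵥ (C *ᵥ t)) by
      simp only [Matrix.mulVec_mulVec, Matrix.mul_assoc], ← kalman_mv_dot]
  have hyc : y - C.mulVec xbar = e - C *ᵥ t := by
    rw [hedef, htdef, Matrix.mulVec_sub]
    abel
  have h4c : (y - C.mulVec xbar) ⬝ᵥ V⁻¹ *ᵥ (y - C.mulVec xbar)
      = e ⬝ᵥ V⁻¹ *ᵥ e - 2 * (t ⬝ᵥ u) + (C *ᵥ t) ⬝ᵥ V⁻¹ *ᵥ (C *ᵥ t) := by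
    rw [hyc]
    have hcross : e ⬝ᵥ V⁻¹ *ᵥ (C *ᵥ t) = t ⬝ᵥ u := by
      rw [kalman_sym_dot hVsym, htu]
    have hcross2 : (C *ᵥ t) ⬝ᵥ V⁻¹ *ᵥ e = t ⬝ᵥ u := htu.symm
    simp only [Matrix.mulVec_sub, sub_dotProduct, dotProduct_sub]
    rw [hcross, hcross2]
    ring
  have hW : (V + C * Sig * Cᵀ)⁻¹ = V⁻¹ - V⁻¹ * C * S⁻¹ * Cᵀ * V⁻¹ := by
    rw [hSdef]
    exact Matrix.add_mul_mul_inv_eq_sub V C Sig Cᵀ hV.isUnit hSig.isUnit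
      ((Matrix.isUnit_iff_isUnit_det S).mpr hSd)
  have h4d : e ⬝ᵥ (V + C * Sig * Cᵀ)⁻¹ *ᵥ e = e ⬝ᵥ V⁻¹ *ᵥ e - u ⬝ᵥ g := by
    rw [hW, Matrix.sub_mulVec, dotProduct_sub]
    congr 1
    rw [show (V⁻¹ * C * S⁻¹ * Cᵀ * V⁻¹) *ᵥ e = V⁻¹ *ᵥ (C *ᵥ g) by
      rw [hgdef, hudef]
      simp only [Matrix.mulVec_mulVec, Matrix.mul_assoc]]
    rw [kalman_sym_dot hVsym, kalman_mv_dot, ← hudef, dotProduct_comm]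
  have hbracket : z ⬝ᵥ S *ᵥ z
      = t ⬝ᵥ Sig⁻¹ *ᵥ t + (y - C.mulVec xbar) ⬝ᵥ V⁻¹ *ᵥ (y - C.mulVec xbar)
        - e ⬝ᵥ (V + C * Sig * Cᵀ)⁻¹ *ᵥ e := by
    rw [h4a, h4b, h4c, h4d]; ring
  have h1α : (0:ℝ) ≤ 1 + 1/α := by positivity
  calc (xbar' - xhat') ⬝ᵥ Sig'⁻¹ *ᵥ (xbar' - xhat')
      ≤ (1 + 1/α) * (a ⬝ᵥ Sig'⁻¹ *ᵥ a) + (1 + α) * (w ⬝ᵥ Sig'⁻¹ *ᵥ w) := hstep1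
    _ ≤ (1 + 1/α) * (z ⬝ᵥ S *ᵥ z) + (1 + α) * (w ⬝ᵥ Sig'⁻¹ *ᵥ w) := by
        gcongr
        exact hstep2.trans_eq hstep3
    _ = (1 + 1/α) *
          (t ⬝ᵥ Sig⁻¹ *ᵥ t + (y - C.mulVec xbar) ⬝ᵥ V⁻¹ *ᵥ (y - C.mulVec xbar)
            - e ⬝ᵥ (V + C * Sig * Cᵀ)⁻¹ *ᵥ e)
        + (1 + α) * (w ⬝ᵥ Sig'⁻¹ *ᵥ w) := by rw [hbracket]
end

section
/- Let A ∈ ℝ^{n×n} be invertible, C ∈ ℝ^{p×n}, V ∈ ℝ^{p×p} positive definite, Q ∈ ℝ^{n×n} positive semidefinite, and let Σ ∈ ℝ^{n×n} be a positive definite solution of the discrete algebraic Riccati equation Σ = A(Σ⁻¹ + CᵀV⁻¹C)⁻¹Aᵀ + Q, with steady-state Kalman gain K̄ = A(Σ⁻¹ + CᵀV⁻¹C)⁻¹CᵀV⁻¹. Let {y_t} ⊂ ℝᵖ be an arbitrary observation sequence and run the steady-state Kalman filter x̂_0 = 0, x̂_{t+1} = A x̂_t + K̄(y_t − C x̂_t).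 Define r̄ = σ̄(V^{-1/2}(V + CΣCᵀ)V^{-1/2}) and a = σ̄(Σ⁻¹). Then for every T ≥ 1, every α > 0, and every comparator sequence {x̄_0, …, x̄_T} ⊂ ℝⁿ: Σ_{t=0}^{T−1} ‖y_t − C x̂_t‖²_{V⁻¹} ≤ r̄ · Σ_{t=0}^{T−1} ‖y_t − C x̄_t‖²_{V⁻¹} + r̄ a ‖x̄_0‖² + r̄ a ( (1/α) Σ_{t=0}^{T−1} ‖x̄_t − x̂_t‖² + α Σ_{t=0}^{T−1} ‖x̄_{t+1} − A x̄_t‖² ). -/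
open Matrix
open scoped Matrix.Norms.L2Operator

/-- The positive semidefinite square root, with its Mathlib (Dec 2024) definition
`Matrix.PosSemidef.sqrt`, which is no longer in Mathlib. -/
noncomputable def Matrix.PosSemidef.sqrt {n : Type*} [Fintype n] [DecidableEq n] {𝕜 : Type*}
    [RCLike 𝕜] [PartialOrder 𝕜] {A : Matrix n n 𝕜} (hA : A.PosSemidef) : Matrix n n 𝕜 :=
  hA.1.eigenvectorUnitary.1 * diagonal ((↑) ∘ (√·) ∘ hA.1.eigenvalues) *
  (star hA.1.eigenvectorUnitary : Matrix n n 𝕜)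

namespace SSRB

variable {n m : ℕ}

lemma star_eq (x : Fin n → ℝ) : star x = x := by
  funext i; simp

lemma psd_quad {M : Matrix (Fin n) (Fin n) ℝ} (h : M.PosSemidef) (x : Fin n → ℝ) :
    0 ≤ x ⬝ᵥ M *ᵥ x := by
  simpa [star_eq] using h.dotProduct_mulVec_nonneg x

lemma pd_quad {M : Matrix (Fin n) (Fin n) ℝ} (h : M.PosDef) {x : Fin n → ℝ} (hx : x ≠ 0) :
    0 < x ⬝ᵥ M *ᵥ x := by
  simpa [star_eq] using h.dotProduct_mulVec_pos hx

lemma symm_of_hermitian {M : Matrix (Fin n) (Fin n) ℝ} (h : M.IsHermitian) : Mᵀ = M := h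

lemma quad_symm {M : Matrix (Fin n) (Fin n) ℝ} (hM : Mᵀ = M) (x y : Fin n → ℝ) :
    x ⬝ᵥ M *ᵥ y = y ⬝ᵥ M *ᵥ x := by
  rw [Matrix.dotProduct_mulVec, ← Matrix.mulVec_transpose, hM, dotProduct_comm]

lemma quad_conj (M : Matrix (Fin n) (Fin n) ℝ) (B : Matrix (Fin n) (Fin m) ℝ)
    (x : Fin m → ℝ) : (B *ᵥ x) ⬝ᵥ M *ᵥ (B *ᵥ x) = x ⬝ᵥ (Bᵀ * M * B) *ᵥ x := by
  rw [Matrix.mul_assoc, ← Matrix.mulVec_mulVec, Matrix.dotProduct_mulVec x Bᵀ,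
    Matrix.vecMul_transpose, ← Matrix.mulVec_mulVec]

lemma mulVec_dot (M : Matrix (Fin n) (Fin m) ℝ) (v : Fin m → ℝ) (w : Fin n → ℝ) :
    (M *ᵥ v) ⬝ᵥ w = v ⬝ᵥ (Mᵀ *ᵥ w) := by
  rw [dotProduct_comm, Matrix.dotProduct_mulVec w M v, ← Matrix.mulVec_transpose,
    dotProduct_comm]

lemma dot_self_nonneg (v : Fin n → ℝ) : 0 ≤ v ⬝ᵥ v :=
  Finset.sum_nonneg fun i _ => mul_self_nonneg (v i)

lemma quad_opNorm (M : Matrix (Fin n) (Fin n) ℝ) (x : Fin n → ℝ) :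
    x ⬝ᵥ M *ᵥ x ≤ ‖M‖ * (x ⬝ᵥ x) := by
  set x' : EuclideanSpace ℝ (Fin n) := (WithLp.equiv 2 _).symm x with hx'
  set y' : EuclideanSpace ℝ (Fin n) := (WithLp.equiv 2 _).symm (M *ᵥ x) with hy'
  have hin : x ⬝ᵥ M *ᵥ x = inner ℝ x' y' := by
    simp [PiLp.inner_apply, dotProduct, hx', hy', WithLp.equiv, mul_comm]
  have h2 : (inner ℝ x' y' : ℝ) ≤ ‖x'‖ * ‖y'‖ := real_inner_le_norm _ _
  have h3 : ‖y'‖ ≤ ‖M‖ * ‖x'‖ := M.l2_opNorm_mulVec x'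
  have h4 : x ⬝ᵥ x = ‖x'‖ * ‖x'‖ := by
    rw [← real_inner_self_eq_norm_mul_norm, hx', PiLp.inner_apply]
    simp [dotProduct, pow_two]
  rw [hin, h4]
  nlinarith [norm_nonneg x', norm_nonneg (E := Matrix (Fin n) (Fin n) ℝ) M]


lemma sqrt_facts {V : Matrix (Fin n) (Fin n) ℝ} (hV : V.PosSemidef) :
    (hV.sqrt)ᵀ = hV.sqrt ∧ hV.sqrt * hV.sqrt = V := by
  have hst : ∀ M : Matrix (Fin n) (Fin n) ℝ, star M = Mᵀ := fun M => by
    rw [Matrix.star_eq_conjTranspose, Matrix.conjTranspose_eq_transpose_of_trivial]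
  have hU : (star hV.1.eigenvectorUnitary : Matrix (Fin n) (Fin n) ℝ) * hV.1.eigenvectorUnitary.1 = 1 :=
    Unitary.coe_star_mul_self _
  constructor
  · simp only [Matrix.PosSemidef.sqrt, Matrix.transpose_mul, Unitary.coe_star, hst,
      Matrix.transpose_transpose, Matrix.diagonal_transpose, Matrix.mul_assoc]
  · conv_rhs => rw [hV.1.spectral_theorem]
    simp only [Matrix.PosSemidef.sqrt]
    rw [Unitary.conjStarAlgAut_apply]
    calc _ = hV.1.eigenvectorUnitary.1 * (diagonal ((↑) ∘ (√·) ∘ hV.1.eigenvalues) *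
        ((star hV.1.eigenvectorUnitary : Matrix (Fin n) (Fin n) ℝ) * hV.1.eigenvectorUnitary.1) *
        diagonal ((↑) ∘ (√·) ∘ hV.1.eigenvalues)) *
        (star hV.1.eigenvectorUnitary : Matrix (Fin n) (Fin n) ℝ) := by
          simp only [Matrix.mul_assoc]
          rfl
      _ = _ := by
          rw [hU, Matrix.mul_one, Matrix.diagonal_mul_diagonal]
          congr 3
          funext i
          simp [Real.mul_self_sqrt (hV.eigenvalues_nonneg i)]

lemma mul_inv_self {M : Matrix (Fin n) (Fin n) ℝ} (h : M.PosDef) : M * M⁻¹ = 1 :=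
  Matrix.mul_nonsing_inv M (isUnit_iff_ne_zero.mpr h.det_pos.ne')

lemma inv_mul_self {M : Matrix (Fin n) (Fin n) ℝ} (h : M.PosDef) : M⁻¹ * M = 1 :=
  Matrix.nonsing_inv_mul M (isUnit_iff_ne_zero.mpr h.det_pos.ne')

/-- Key quadratic inequality: `2⟨z,x⟩ - ⟨z,Rz⟩ ≤ ⟨x,R⁻¹x⟩` for posdef `R`. -/
lemma two_dot_le {R : Matrix (Fin n) (Fin n) ℝ} (hR : R.PosDef) (x z : Fin n → ℝ) :
    2 * (z ⬝ᵥ x) - z ⬝ᵥ R *ᵥ z ≤ x ⬝ᵥ R⁻¹ *ᵥ x := by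
  have h0 : 0 ≤ (R⁻¹ *ᵥ x - z) ⬝ᵥ R *ᵥ (R⁻¹ *ᵥ x - z) := psd_quad hR.posSemidef _
  have hRu : R *ᵥ (R⁻¹ *ᵥ x) = x := by
    rw [Matrix.mulVec_mulVec, mul_inv_self hR, Matrix.one_mulVec]
  have hsym : Rᵀ = R := hR.isHermitian
  have hexp : (R⁻¹ *ᵥ x - z) ⬝ᵥ R *ᵥ (R⁻¹ *ᵥ x - z)
      = x ⬝ᵥ R⁻¹ *ᵥ x - 2 * (z ⬝ᵥ x) + z ⬝ᵥ R *ᵥ z := by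
    have h1 : (R⁻¹ *ᵥ x) ⬝ᵥ x = x ⬝ᵥ R⁻¹ *ᵥ x := dotProduct_comm _ _
    have h2 : (R⁻¹ *ᵥ x) ⬝ᵥ R *ᵥ z = z ⬝ᵥ x := by
      rw [quad_symm hsym, hRu, dotProduct_comm]
    have h3 : z ⬝ᵥ R *ᵥ (R⁻¹ *ᵥ x) = z ⬝ᵥ x := by rw [hRu]
    simp only [Matrix.mulVec_sub, hRu, sub_dotProduct, dotProduct_sub]
    rw [h1, h2]
    ring
  linarith [hexp ▸ h0]

/-- Löwner-order anti-monotonicity of the inverse, scalar-weighted, quadratic form version. -/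
lemma inv_quad_le {R S : Matrix (Fin n) (Fin n) ℝ} (hR : R.PosDef) (hS : S.PosDef)
    {r : ℝ} (hr : 0 < r) (h : ∀ x, x ⬝ᵥ R *ᵥ x ≤ r * (x ⬝ᵥ S *ᵥ x)) (x : Fin n → ℝ) :
    x ⬝ᵥ S⁻¹ *ᵥ x ≤ r * (x ⬝ᵥ R⁻¹ *ᵥ x) := by
  set y := S⁻¹ *ᵥ x with hy
  have hSy : S *ᵥ y = x := by
    rw [hy, Matrix.mulVec_mulVec, mul_inv_self hS, Matrix.one_mulVec]
  have h1 : x ⬝ᵥ S⁻¹ *ᵥ x = y ⬝ᵥ x := dotProduct_comm _ _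
  have h2 : y ⬝ᵥ S *ᵥ y = y ⬝ᵥ x := by rw [hSy]
  have h3 := two_dot_le hR x (r⁻¹ • y)
  have h4 : (r⁻¹ • y) ⬝ᵥ x = r⁻¹ * (y ⬝ᵥ x) := by
    rw [smul_dotProduct]; simp
  have h5 : (r⁻¹ • y) ⬝ᵥ R *ᵥ (r⁻¹ • y) = r⁻¹ * r⁻¹ * (y ⬝ᵥ R *ᵥ y) := by
    simp only [smul_dotProduct, Matrix.mulVec_smul, dotProduct_smul,
      smul_eq_mul]
    ring
  have h6 := h y
  rw [h4, h5] at h3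
  have hr' : (0:ℝ) < r⁻¹ := by positivity
  have h7 : y ⬝ᵥ R *ᵥ y ≤ r * (y ⬝ᵥ x) := by rw [← h2]; exact h6
  rw [h1]
  have hrne : r ≠ 0 := ne_of_gt hr
  have h8 := mul_le_mul_of_nonneg_left h3 hr.le
  have h9 : r * (2 * (r⁻¹ * (y ⬝ᵥ x)) - r⁻¹ * r⁻¹ * (y ⬝ᵥ R *ᵥ y))
      = 2 * (y ⬝ᵥ x) - r⁻¹ * (y ⬝ᵥ R *ᵥ y) := by
    field_simp
  have h10 := mul_le_mul_of_nonneg_left h7 hr'.le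
  have h11 : r⁻¹ * (r * (y ⬝ᵥ x)) = y ⬝ᵥ x := by field_simp
  rw [h9] at h8
  rw [h11] at h10
  linarith

/-- Weighted AM-GM for quadratic forms: `(x+z)ᵀM(x+z) ≤ (1+1/α)xᵀMx + (1+α)zᵀMz`. -/
lemma quad_add_le {M : Matrix (Fin n) (Fin n) ℝ} (hM : M.PosSemidef) (x z : Fin n → ℝ)
    {α : ℝ} (hα : 0 < α) :
    (x + z) ⬝ᵥ M *ᵥ (x + z) ≤ (1 + 1/α) * (x ⬝ᵥ M *ᵥ x) + (1 + α) * (z ⬝ᵥ M *ᵥ z) := by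
  have hsym : Mᵀ = M := hM.isHermitian
  set t := Real.sqrt α with ht
  have ht0 : 0 < t := Real.sqrt_pos.2 hα
  have ht2 : t * t = α := Real.mul_self_sqrt hα.le
  have h0 : 0 ≤ (t⁻¹ • x - t • z) ⬝ᵥ M *ᵥ (t⁻¹ • x - t • z) := psd_quad hM _
  have htne : t ≠ 0 := ne_of_gt ht0
  have h2 : z ⬝ᵥ M *ᵥ x = x ⬝ᵥ M *ᵥ z := quad_symm hsym _ _
  have hexp : (t⁻¹ • x - t • z) ⬝ᵥ M *ᵥ (t⁻¹ • x - t • z)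
      = t⁻¹ * t⁻¹ * (x ⬝ᵥ M *ᵥ x) - 2 * (x ⬝ᵥ M *ᵥ z) + t * t * (z ⬝ᵥ M *ᵥ z) := by
    simp only [Matrix.mulVec_sub, Matrix.mulVec_smul, sub_dotProduct,
      smul_dotProduct, dotProduct_sub, dotProduct_smul,
      smul_eq_mul, h2]
    field_simp
    ring
  have hexp2 : (x + z) ⬝ᵥ M *ᵥ (x + z)
      = x ⬝ᵥ M *ᵥ x + 2 * (x ⬝ᵥ M *ᵥ z) + z ⬝ᵥ M *ᵥ z := by
    simp only [Matrix.mulVec_add, add_dotProduct, dotProduct_add, h2]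
    ring
  have hinv : t⁻¹ * t⁻¹ = 1/α := by
    rw [← mul_inv]; rw [ht2]; exact (one_div α).symm
  rw [hexp2]
  rw [hexp, hinv, ht2] at h0
  linarith [h0]

end SSRB

set_option maxHeartbeats 1000000 in
/-- Steady-state worst-case bound (Lemma 3). Run the steady-state Kalman filter
`x̂_0 = 0`, `x̂_{t+1} = A x̂_t + K̄(y_t − C x̂_t)` where `Σ` solves the DARE
`Σ = A(Σ⁻¹ + CᵀV⁻¹C)⁻¹Aᵀ + Q` and `K̄ = A(Σ⁻¹ + CᵀV⁻¹C)⁻¹CᵀV⁻¹`. Then with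
`r̄ = σ̄(V^{-1/2}(V + CΣCᵀ)V^{-1/2})` and `a = σ̄(Σ⁻¹)`, for every `T ≥ 1`, `α > 0`
and comparator sequence `{x̄_t}`:
`L_T ≤ r̄ V_T + r̄ a ‖x̄_0‖² + r̄ a ((1/α) Σ_{t<T} ‖x̄_t − x̂_t‖² + α Σ_{t<T} ‖x̄_{t+1} − A x̄_t‖²)`. -/
theorem steady_state_regret_bound {n p : ℕ}
    (A : Matrix (Fin n) (Fin n) ℝ) (hA : IsUnit A.det)
    (C : Matrix (Fin p) (Fin n) ℝ)
    (V : Matrix (Fin p) (Fin p) ℝ) (hV : V.PosDef)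
    (Q : Matrix (Fin n) (Fin n) ℝ) (hQ : Q.PosSemidef)
    (Sig : Matrix (Fin n) (Fin n) ℝ) (hSig : Sig.PosDef)
    (hDARE : Sig = A * (Sig⁻¹ + Cᵀ * V⁻¹ * C)⁻¹ * Aᵀ + Q)
    (K : Matrix (Fin n) (Fin p) ℝ)
    (hK : K = A * (Sig⁻¹ + Cᵀ * V⁻¹ * C)⁻¹ * Cᵀ * V⁻¹)
    (y : ℕ → Fin p → ℝ)
    (xhat : ℕ → Fin n → ℝ) (hx0 : xhat 0 = 0)
    (hrec : ∀ t : ℕ, xhat (t + 1) =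
      A.mulVec (xhat t) + K.mulVec (y t - C.mulVec (xhat t)))
    (T : ℕ) (hT : 1 ≤ T) (α : ℝ) (hα : 0 < α)
    (xbar : ℕ → Fin n → ℝ) :
    (∑ t ∈ Finset.range T,
        (y t - C.mulVec (xhat t)) ⬝ᵥ V⁻¹.mulVec (y t - C.mulVec (xhat t))) ≤
      sbar ((hV.posSemidef.sqrt)⁻¹ * (V + C * Sig * Cᵀ) * (hV.posSemidef.sqrt)⁻¹) *
          (∑ t ∈ Finset.range T,
            (y t - C.mulVec (xbar t)) ⬝ᵥ V⁻¹.mulVec (y t - C.mulVec (xbar t)))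
        + sbar ((hV.posSemidef.sqrt)⁻¹ * (V + C * Sig * Cᵀ) * (hV.posSemidef.sqrt)⁻¹) *
            sbar Sig⁻¹ * (xbar 0 ⬝ᵥ xbar 0)
        + sbar ((hV.posSemidef.sqrt)⁻¹ * (V + C * Sig * Cᵀ) * (hV.posSemidef.sqrt)⁻¹) *
            sbar Sig⁻¹ *
            ((1 / α) * ∑ t ∈ Finset.range T,
                (xbar t - xhat t) ⬝ᵥ (xbar t - xhat t)
              + α * ∑ t ∈ Finset.range T,
                  (xbar (t + 1) - A.mulVec (xbar t)) ⬝ᵥ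
                    (xbar (t + 1) - A.mulVec (xbar t))) := by
  classical
  set S := hV.posSemidef.sqrt with hSdef
  set G := V + C * Sig * Cᵀ with hGdef
  set N := Sig⁻¹ + Cᵀ * V⁻¹ * C with hNdef
  set P := N⁻¹ with hPdef
  set rb := sbar (S⁻¹ * G * S⁻¹) with hrbdef
  set a := sbar Sig⁻¹ with hadef
  have hrb0 : 0 ≤ rb := norm_nonneg _
  have ha0 : 0 ≤ a := norm_nonneg _
  -- nonnegativity of the three comparator sums
  have hX0 : 0 ≤ ∑ t ∈ Finset.range T, (xbar t - xhat t) ⬝ᵥ (xbar t - xhat t) :=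
    Finset.sum_nonneg fun t _ => SSRB.dot_self_nonneg _
  have hW0 : 0 ≤ ∑ t ∈ Finset.range T,
      (xbar (t + 1) - A *ᵥ xbar t) ⬝ᵥ (xbar (t + 1) - A *ᵥ xbar t) :=
    Finset.sum_nonneg fun t _ => SSRB.dot_self_nonneg _
  have hx00 : 0 ≤ xbar 0 ⬝ᵥ xbar 0 := SSRB.dot_self_nonneg _
  rcases Nat.eq_zero_or_pos p with hp | hp
  · -- degenerate case `p = 0`: the losses vanish
    subst hp
    have hz : ∀ (v w : Fin 0 → ℝ), v ⬝ᵥ w = 0 := fun v w => by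
      simp [dotProduct]
    simp only [hz, Finset.sum_const_zero, mul_zero, zero_add]
    have h1 : 0 ≤ (1 / α) * ∑ t ∈ Finset.range T, (xbar t - xhat t) ⬝ᵥ (xbar t - xhat t) :=
      mul_nonneg (by positivity) hX0
    have h2 : 0 ≤ α * ∑ t ∈ Finset.range T,
        (xbar (t + 1) - A *ᵥ xbar t) ⬝ᵥ (xbar (t + 1) - A *ᵥ xbar t) :=
      mul_nonneg hα.le hW0
    have := mul_nonneg (mul_nonneg hrb0 ha0) hx00
    have := mul_nonneg (mul_nonneg hrb0 ha0) (add_nonneg h1 h2)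
    linarith
  -- main case
  have hWpd : (V⁻¹).PosDef := hV.inv
  have hWsym : (V⁻¹)ᵀ = V⁻¹ := SSRB.symm_of_hermitian hWpd.isHermitian
  have hCWC : (Cᵀ * V⁻¹ * C).PosSemidef := hWpd.posSemidef.conjTranspose_mul_mul_same C
  have hNpd : N.PosDef := hSig.inv.add_posSemidef hCWC
  have hNsym : Nᵀ = N := SSRB.symm_of_hermitian hNpd.isHermitian
  have hPpd : P.PosDef := hNpd.inv
  have hPsym : Pᵀ = P := SSRB.symm_of_hermitian hPpd.isHermitian
  have hNP : N * P = 1 := SSRB.mul_inv_self hNpd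
  have hPN : P * N = 1 := SSRB.inv_mul_self hNpd
  have hSigSym : Sigᵀ = Sig := SSRB.symm_of_hermitian hSig.isHermitian
  have hSigInvSym : (Sig⁻¹)ᵀ = Sig⁻¹ := SSRB.symm_of_hermitian hSig.inv.isHermitian
  have hGpd : G.PosDef := hV.add_posSemidef (hSig.posSemidef.mul_mul_conjTranspose_same C)
  have hSsym : Sᵀ = S := (SSRB.sqrt_facts hV.posSemidef).1
  have hSS : S * S = V := (SSRB.sqrt_facts hV.posSemidef).2
  have hSdet : IsUnit S.det := by
    have hdet : S.det * S.det = V.det := by rw [← Matrix.det_mul, hSS]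
    have hVdet : V.det ≠ 0 := ne_of_gt hV.det_pos
    have : S.det ≠ 0 := by
      intro h; rw [h, mul_zero] at hdet; exact hVdet hdet.symm
    exact isUnit_iff_ne_zero.mpr this
  have hSinvS : S⁻¹ * S = 1 := Matrix.nonsing_inv_mul S hSdet
  have hSinvsym : (S⁻¹)ᵀ = S⁻¹ := by rw [Matrix.transpose_nonsing_inv, hSsym]
  have hVW : V * V⁻¹ = 1 := SSRB.mul_inv_self hV
  -- Woodbury identity for `G⁻¹`
  have hkey : Sig * (Cᵀ * V⁻¹ * C) * P = Sig - P := by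
    have h1 : Cᵀ * V⁻¹ * C = N - Sig⁻¹ := by rw [hNdef]; abel
    have hSigInv : Sig * Sig⁻¹ = 1 := SSRB.mul_inv_self hSig
    calc Sig * (Cᵀ * V⁻¹ * C) * P = Sig * (N * P) - (Sig * Sig⁻¹) * P := by
          rw [h1]; noncomm_ring
      _ = Sig - P := by rw [hNP, hSigInv, Matrix.mul_one, Matrix.one_mul]
  have hright : G * (V⁻¹ - V⁻¹ * C * P * (Cᵀ * V⁻¹)) = 1 := by
    calc G * (V⁻¹ - V⁻¹ * C * P * (Cᵀ * V⁻¹))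
        = V * V⁻¹ + C * (Sig * (Cᵀ * V⁻¹))
          - ((V * V⁻¹) * (C * P * (Cᵀ * V⁻¹))
            + C * (Sig * (Cᵀ * V⁻¹ * C) * P) * (Cᵀ * V⁻¹)) := by
          rw [hGdef]
          simp only [Matrix.mul_sub, Matrix.sub_mul, Matrix.mul_add, Matrix.add_mul,
            Matrix.mul_assoc]
      _ = 1 + C * (Sig * (Cᵀ * V⁻¹))
          - (C * P * (Cᵀ * V⁻¹) + C * (Sig - P) * (Cᵀ * V⁻¹)) := by
          rw [hVW, hkey, Matrix.one_mul]
      _ = 1 := by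
          simp only [Matrix.mul_sub, Matrix.sub_mul, Matrix.mul_add, Matrix.add_mul,
            Matrix.mul_assoc, Matrix.one_mul]
          abel
  have hGinv : G⁻¹ = V⁻¹ - V⁻¹ * C * P * (Cᵀ * V⁻¹) := Matrix.inv_eq_right_inv hright
  -- `G ⪯ rb • V` as quadratic forms
  have hGV : ∀ x : Fin p → ℝ, x ⬝ᵥ G *ᵥ x ≤ rb * (x ⬝ᵥ V *ᵥ x) := by
    intro x
    have hx : S⁻¹ *ᵥ (S *ᵥ x) = x := by
      rw [Matrix.mulVec_mulVec, hSinvS, Matrix.one_mulVec]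
    have h1 : x ⬝ᵥ G *ᵥ x = (S *ᵥ x) ⬝ᵥ (S⁻¹ * G * S⁻¹) *ᵥ (S *ᵥ x) := by
      conv_lhs => rw [← hx]
      rw [SSRB.quad_conj G S⁻¹ (S *ᵥ x), hSinvsym]
    have h2 : (S *ᵥ x) ⬝ᵥ (S *ᵥ x) = x ⬝ᵥ V *ᵥ x := by
      rw [SSRB.mulVec_dot S x (S *ᵥ x), Matrix.mulVec_mulVec, hSsym, hSS]
    have h3 := SSRB.quad_opNorm (S⁻¹ * G * S⁻¹) (S *ᵥ x)
    rw [h1, ← h2, hrbdef]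
    simpa [sbar] using h3
  have hrbpos : 0 < rb := by
    set x₀ : Fin p → ℝ := Pi.single ⟨0, hp⟩ 1 with hx₀
    have hx₀ne : x₀ ≠ 0 := by
      intro h
      have := congrFun h ⟨0, hp⟩
      simp [hx₀] at this
    have h1 : 0 < x₀ ⬝ᵥ G *ᵥ x₀ := SSRB.pd_quad hGpd hx₀ne
    have h2 : 0 < x₀ ⬝ᵥ V *ᵥ x₀ := SSRB.pd_quad hV hx₀ne
    nlinarith [hGV x₀]
  have hVG : ∀ x : Fin p → ℝ, x ⬝ᵥ V⁻¹ *ᵥ x ≤ rb * (x ⬝ᵥ G⁻¹ *ᵥ x) :=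
    SSRB.inv_quad_le hGpd hV hrbpos hGV
  -- the DARE contraction: `(A q)ᵀ Σ⁻¹ (A q) ≤ qᵀ N q`
  have hAtdet : IsUnit (Aᵀ).det := by simpa using hA
  have hAAt : Aᵀ * (Aᵀ)⁻¹ = 1 := Matrix.mul_nonsing_inv _ hAtdet
  have hAiA : A⁻¹ * A = 1 := Matrix.nonsing_inv_mul _ hA
  have hAPApd : (A * P * Aᵀ).PosDef := by
    refine Matrix.PosDef.of_dotProduct_mulVec_pos ?_ fun x hx => ?_
    · show (A * P * Aᵀ)ᵀ = A * P * Aᵀ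
      rw [Matrix.transpose_mul, Matrix.transpose_mul, Matrix.transpose_transpose, hPsym,
        Matrix.mul_assoc]
    · have hxA : Aᵀ *ᵥ x ≠ 0 := by
        intro h
        have : (Aᵀ)⁻¹ *ᵥ (Aᵀ *ᵥ x) = x := by
          rw [Matrix.mulVec_mulVec, Matrix.nonsing_inv_mul _ hAtdet, Matrix.one_mulVec]
        rw [h, Matrix.mulVec_zero] at this
        exact hx this.symm
      have h1 : (Aᵀ *ᵥ x) ⬝ᵥ P *ᵥ (Aᵀ *ᵥ x) = x ⬝ᵥ (A * P * Aᵀ) *ᵥ x := by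
        rw [SSRB.quad_conj P Aᵀ x, Matrix.transpose_transpose]
      have h2 := SSRB.pd_quad hPpd hxA
      rw [h1] at h2
      simpa [SSRB.star_eq] using h2
  have hAPA : ∀ x : Fin n → ℝ, x ⬝ᵥ (A * P * Aᵀ) *ᵥ x ≤ 1 * (x ⬝ᵥ Sig *ᵥ x) := by
    intro x
    have h1 : x ⬝ᵥ Sig *ᵥ x = x ⬝ᵥ (A * P * Aᵀ) *ᵥ x + x ⬝ᵥ Q *ᵥ x := by
      conv_lhs => rw [hDARE]
      rw [Matrix.add_mulVec, dotProduct_add]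
    have h2 := SSRB.psd_quad hQ x
    rw [one_mul]
    linarith
  have hAPAinv : (A * P * Aᵀ)⁻¹ = (Aᵀ)⁻¹ * N * A⁻¹ := by
    have hNdet : IsUnit N.det := isUnit_iff_ne_zero.mpr hNpd.det_pos.ne'
    have hPinv : P⁻¹ = N := by rw [hPdef, Matrix.nonsing_inv_nonsing_inv _ hNdet]
    rw [Matrix.mul_inv_rev, Matrix.mul_inv_rev, hPinv, Matrix.mul_assoc]
  have hF4 : ∀ q : Fin n → ℝ,
      (A *ᵥ q) ⬝ᵥ Sig⁻¹ *ᵥ (A *ᵥ q) ≤ q ⬝ᵥ N *ᵥ q := by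
    intro q
    have h1 := SSRB.inv_quad_le hAPApd hSig one_pos hAPA (A *ᵥ q)
    rw [one_mul] at h1
    have h2 : (A *ᵥ q) ⬝ᵥ (A * P * Aᵀ)⁻¹ *ᵥ (A *ᵥ q) = q ⬝ᵥ N *ᵥ q := by
      rw [hAPAinv, SSRB.quad_conj ((Aᵀ)⁻¹ * N * A⁻¹) A q]
      have h3 : Aᵀ * ((Aᵀ)⁻¹ * N * A⁻¹) * A = N := by
        calc Aᵀ * ((Aᵀ)⁻¹ * N * A⁻¹) * A
            = (Aᵀ * (Aᵀ)⁻¹) * (N * (A⁻¹ * A)) := by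
              simp only [Matrix.mul_assoc]
          _ = N := by rw [hAAt, hAiA, Matrix.one_mul, Matrix.mul_one]
      rw [h3]
    rw [← h2]
    exact h1
  -- potential function
  set Φ : ℕ → ℝ := fun t => (xbar t - xhat t) ⬝ᵥ Sig⁻¹ *ᵥ (xbar t - xhat t) with hΦdef
  have hΦnn : ∀ t, 0 ≤ Φ t := fun t => SSRB.psd_quad hSig.inv.posSemidef _
  -- the per-step inequality
  have step : ∀ t : ℕ, (y t - C *ᵥ xhat t) ⬝ᵥ V⁻¹ *ᵥ (y t - C *ᵥ xhat t) ≤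
      rb * ((y t - C *ᵥ xbar t) ⬝ᵥ V⁻¹ *ᵥ (y t - C *ᵥ xbar t)
        + Φ t - (α/(α+1)) * Φ (t+1)
        + α * ((xbar (t+1) - A *ᵥ xbar t) ⬝ᵥ Sig⁻¹ *ᵥ (xbar (t+1) - A *ᵥ xbar t))) := by
    intro t
    set et := y t - C *ᵥ xhat t with het
    set wt := xbar t - xhat t with hwt
    set ut := y t - C *ᵥ xbar t with hut0
    set bt := (Cᵀ * V⁻¹) *ᵥ et with hbt
    set qt := wt - P *ᵥ bt with hqt
    set dt := xbar (t+1) - A *ᵥ xbar t with hdt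
    have hut : ut = et - C *ᵥ wt := by
      rw [hut0, het, hwt, Matrix.mulVec_sub]; abel
    have hcross : et ⬝ᵥ V⁻¹ *ᵥ (C *ᵥ wt) = bt ⬝ᵥ wt := by
      have h := SSRB.mulVec_dot (Cᵀ * V⁻¹) et wt
      rw [Matrix.transpose_mul, hWsym, Matrix.transpose_transpose] at h
      rw [hbt, Matrix.mulVec_mulVec]
      exact h.symm
    have hs1 : ut ⬝ᵥ V⁻¹ *ᵥ ut
        = et ⬝ᵥ V⁻¹ *ᵥ et - 2 * (bt ⬝ᵥ wt) + (C *ᵥ wt) ⬝ᵥ V⁻¹ *ᵥ (C *ᵥ wt) := by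
      rw [hut]
      simp only [Matrix.mulVec_sub, sub_dotProduct, dotProduct_sub]
      have h2 : (C *ᵥ wt) ⬝ᵥ V⁻¹ *ᵥ et = et ⬝ᵥ V⁻¹ *ᵥ (C *ᵥ wt) :=
        SSRB.quad_symm hWsym _ _
      rw [h2, hcross]; ring
    have hNPb : N *ᵥ (P *ᵥ bt) = bt := by
      rw [Matrix.mulVec_mulVec, hNP, Matrix.one_mulVec]
    have hs2 : qt ⬝ᵥ N *ᵥ qt
        = wt ⬝ᵥ N *ᵥ wt - 2 * (bt ⬝ᵥ wt) + bt ⬝ᵥ P *ᵥ bt := by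
      rw [hqt]
      simp only [Matrix.mulVec_sub, sub_dotProduct, dotProduct_sub, hNPb]
      have e1 : wt ⬝ᵥ bt = bt ⬝ᵥ wt := dotProduct_comm _ _
      have e2 : (P *ᵥ bt) ⬝ᵥ N *ᵥ wt = bt ⬝ᵥ wt := by
        rw [SSRB.quad_symm hNsym (P *ᵥ bt) wt, hNPb]
        exact e1
      have e3 : (P *ᵥ bt) ⬝ᵥ bt = bt ⬝ᵥ P *ᵥ bt := by
        rw [SSRB.mulVec_dot, hPsym]
      rw [e1, e2, e3]; ring
    have hs3 : wt ⬝ᵥ N *ᵥ wt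
        = wt ⬝ᵥ Sig⁻¹ *ᵥ wt + (C *ᵥ wt) ⬝ᵥ V⁻¹ *ᵥ (C *ᵥ wt) := by
      rw [hNdef]
      simp only [Matrix.add_mulVec, dotProduct_add]
      rw [SSRB.quad_conj V⁻¹ C wt]
    have hF1 : et ⬝ᵥ V⁻¹ *ᵥ et - bt ⬝ᵥ P *ᵥ bt
        = ut ⬝ᵥ V⁻¹ *ᵥ ut + wt ⬝ᵥ Sig⁻¹ *ᵥ wt - qt ⬝ᵥ N *ᵥ qt := by
      linarith [hs1, hs2, hs3]
    have hF2 : et ⬝ᵥ V⁻¹ *ᵥ et ≤ rb * (et ⬝ᵥ V⁻¹ *ᵥ et - bt ⬝ᵥ P *ᵥ bt) := by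
      have h1 := hVG et
      have h2 : et ⬝ᵥ G⁻¹ *ᵥ et = et ⬝ᵥ V⁻¹ *ᵥ et - bt ⬝ᵥ P *ᵥ bt := by
        rw [hGinv]
        simp only [Matrix.sub_mulVec, dotProduct_sub]
        congr 1
        rw [hbt, SSRB.quad_conj P (Cᵀ * V⁻¹) et, Matrix.transpose_mul, hWsym,
          Matrix.transpose_transpose]
      rw [h2] at h1
      exact h1
    have hKe : K *ᵥ et = A *ᵥ (P *ᵥ bt) := by
      rw [hK, hbt]
      simp only [← Matrix.mulVec_mulVec]
    have hw1 : xbar (t+1) - xhat (t+1) = A *ᵥ qt + dt := by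
      rw [hqt, hrec t, ← het, hKe, hwt, hdt, Matrix.mulVec_sub, Matrix.mulVec_sub]
      abel
    have hqd := SSRB.quad_add_le hSig.inv.posSemidef (A *ᵥ qt) dt hα
    have hΦt1 : Φ (t+1) = (A *ᵥ qt + dt) ⬝ᵥ Sig⁻¹ *ᵥ (A *ᵥ qt + dt) := by
      simp only [hΦdef]
      rw [hw1]
    have hψ : (A *ᵥ qt) ⬝ᵥ Sig⁻¹ *ᵥ (A *ᵥ qt) ≤ qt ⬝ᵥ N *ᵥ qt := hF4 qt
    have h1a : (0:ℝ) ≤ 1 + 1/α := by positivity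
    have hF5 : Φ (t+1) ≤ (1+1/α) * (qt ⬝ᵥ N *ᵥ qt) + (1+α) * (dt ⬝ᵥ Sig⁻¹ *ᵥ dt) := by
      rw [hΦt1]
      have := mul_le_mul_of_nonneg_left hψ h1a
      linarith [hqd]
    have hc1 : (α/(α+1)) * (1+1/α) = 1 := by field_simp
    have hc2 : (α/(α+1)) * (1+α) = α := by
      have h : α + 1 ≠ 0 := by positivity
      rw [div_mul_eq_mul_div, add_comm 1 α, mul_div_assoc, div_self h, mul_one]
    have hcpos : (0:ℝ) < α/(α+1) := by positivity
    have hψlow : (α/(α+1)) * Φ (t+1) ≤ qt ⬝ᵥ N *ᵥ qt + α * (dt ⬝ᵥ Sig⁻¹ *ᵥ dt) := by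
      have h := mul_le_mul_of_nonneg_left hF5 hcpos.le
      rw [mul_add, ← mul_assoc, ← mul_assoc, hc1, hc2, one_mul] at h
      exact h
    have hΦteq : Φ t = wt ⬝ᵥ Sig⁻¹ *ᵥ wt := by
      simp only [hΦdef, hwt]
    have inner : et ⬝ᵥ V⁻¹ *ᵥ et - bt ⬝ᵥ P *ᵥ bt
        ≤ ut ⬝ᵥ V⁻¹ *ᵥ ut + Φ t - (α/(α+1)) * Φ (t+1)
          + α * (dt ⬝ᵥ Sig⁻¹ *ᵥ dt) := by
      linarith [hF1, hψlow, hΦteq]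
    calc et ⬝ᵥ V⁻¹ *ᵥ et ≤ rb * (et ⬝ᵥ V⁻¹ *ᵥ et - bt ⬝ᵥ P *ᵥ bt) := hF2
      _ ≤ rb * (ut ⬝ᵥ V⁻¹ *ᵥ ut + Φ t - (α/(α+1)) * Φ (t+1)
          + α * (dt ⬝ᵥ Sig⁻¹ *ᵥ dt)) := mul_le_mul_of_nonneg_left inner hrb0
  -- summation and telescoping
  set VT := ∑ t ∈ Finset.range T,
      (y t - C *ᵥ xbar t) ⬝ᵥ V⁻¹ *ᵥ (y t - C *ᵥ xbar t) with hVT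
  set XS := ∑ t ∈ Finset.range T, (xbar t - xhat t) ⬝ᵥ (xbar t - xhat t) with hXS
  set WS := ∑ t ∈ Finset.range T,
      (xbar (t+1) - A *ᵥ xbar t) ⬝ᵥ (xbar (t+1) - A *ᵥ xbar t) with hWS
  set ΦS := ∑ t ∈ Finset.range T, Φ t with hΦS
  set ΦS1 := ∑ t ∈ Finset.range T, Φ (t+1) with hΦS1
  set DS := ∑ t ∈ Finset.range T,
      (xbar (t+1) - A *ᵥ xbar t) ⬝ᵥ Sig⁻¹ *ᵥ (xbar (t+1) - A *ᵥ xbar t) with hDS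
  have hsum : (∑ t ∈ Finset.range T,
        (y t - C *ᵥ xhat t) ⬝ᵥ V⁻¹ *ᵥ (y t - C *ᵥ xhat t))
      ≤ rb * (VT + ΦS - (α/(α+1)) * ΦS1 + α * DS) := by
    calc (∑ t ∈ Finset.range T,
        (y t - C *ᵥ xhat t) ⬝ᵥ V⁻¹ *ᵥ (y t - C *ᵥ xhat t))
        ≤ ∑ t ∈ Finset.range T,
            rb * ((y t - C *ᵥ xbar t) ⬝ᵥ V⁻¹ *ᵥ (y t - C *ᵥ xbar t)
              + Φ t - (α/(α+1)) * Φ (t+1)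
              + α * ((xbar (t+1) - A *ᵥ xbar t) ⬝ᵥ Sig⁻¹ *ᵥ (xbar (t+1) - A *ᵥ xbar t))) :=
          Finset.sum_le_sum fun t _ => step t
      _ = rb * (VT + ΦS - (α/(α+1)) * ΦS1 + α * DS) := by
          rw [hVT, hΦS, hΦS1, hDS, ← Finset.mul_sum]
          congr 1
          rw [Finset.sum_add_distrib, Finset.sum_sub_distrib, Finset.sum_add_distrib,
            ← Finset.mul_sum, ← Finset.mul_sum]
  have hshift : ΦS1 = ΦS + Φ T - Φ 0 := by
    rw [hΦS1, hΦS]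
    have h1 := Finset.sum_range_succ' Φ T
    have h2 := Finset.sum_range_succ Φ T
    linarith [h1, h2]
  have hΦS0 : 0 ≤ ΦS := Finset.sum_nonneg fun t _ => hΦnn t
  have htel : ΦS - (α/(α+1)) * ΦS1 ≤ Φ 0 + (1/α) * ΦS := by
    have h1 : ΦS - (α/(α+1)) * ΦS1
        = (1 - α/(α+1)) * ΦS + (α/(α+1)) * (Φ 0 - Φ T) := by
      rw [hshift]; ring
    have h2 : 1 - α/(α+1) = 1/(α+1) := by field_simp; ring
    have h3 : (1:ℝ)/(α+1) ≤ 1/α := by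
      apply one_div_le_one_div_of_le hα; linarith
    have h4 : (0:ℝ) ≤ α/(α+1) := by positivity
    have h5 : α/(α+1) ≤ 1 := by
      rw [div_le_one (by positivity)]; linarith
    have h6 : (1/(α+1)) * ΦS ≤ (1/α) * ΦS := mul_le_mul_of_nonneg_right h3 hΦS0
    have e0 : Φ 0 - Φ T ≤ Φ 0 := by linarith [hΦnn T]
    have e1 : (α/(α+1)) * (Φ 0 - Φ T) ≤ (α/(α+1)) * Φ 0 :=
      mul_le_mul_of_nonneg_left e0 h4
    have e2 : (α/(α+1)) * Φ 0 ≤ Φ 0 := by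
      have h := mul_le_mul_of_nonneg_right h5 (hΦnn 0)
      rwa [one_mul] at h
    rw [h1, h2]
    linarith [h6, e1, e2]
  have hΦb : ∀ t : ℕ, Φ t ≤ a * ((xbar t - xhat t) ⬝ᵥ (xbar t - xhat t)) := by
    intro t
    have h := SSRB.quad_opNorm Sig⁻¹ (xbar t - xhat t)
    simpa [hΦdef, hadef, sbar] using h
  have hΦSle : ΦS ≤ a * XS := by
    rw [hΦS, hXS, Finset.mul_sum]
    exact Finset.sum_le_sum fun t _ => hΦb t
  have hDSle : DS ≤ a * WS := by
    rw [hDS, hWS, Finset.mul_sum]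
    refine Finset.sum_le_sum fun t _ => ?_
    have h := SSRB.quad_opNorm Sig⁻¹ (xbar (t+1) - A *ᵥ xbar t)
    simpa [hadef, sbar] using h
  have hΦ0b : Φ 0 ≤ a * (xbar 0 ⬝ᵥ xbar 0) := by
    have h := SSRB.quad_opNorm Sig⁻¹ (xbar 0 - xhat 0)
    rw [hx0, sub_zero] at h
    simpa [hΦdef, hx0, hadef, sbar] using h
  have hDS0 : 0 ≤ DS :=
    Finset.sum_nonneg fun t _ => SSRB.psd_quad hSig.inv.posSemidef _
  calc (∑ t ∈ Finset.range T,
        (y t - C *ᵥ xhat t) ⬝ᵥ V⁻¹ *ᵥ (y t - C *ᵥ xhat t))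
      ≤ rb * (VT + ΦS - (α/(α+1)) * ΦS1 + α * DS) := hsum
    _ ≤ rb * (VT + (Φ 0 + (1/α) * ΦS) + α * DS) :=
        mul_le_mul_of_nonneg_left (by linarith [htel]) hrb0
    _ ≤ rb * (VT + (a * (xbar 0 ⬝ᵥ xbar 0) + (1/α) * (a * XS)) + α * (a * WS)) := by
        refine mul_le_mul_of_nonneg_left ?_ hrb0
        have g1 : (1/α) * ΦS ≤ (1/α) * (a * XS) :=
          mul_le_mul_of_nonneg_left hΦSle (by positivity)
        have g2 : α * DS ≤ α * (a * WS) := mul_le_mul_of_nonneg_left hDSle hα.le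
        linarith [hΦ0b, g1, g2]
    _ = rb * VT + rb * a * (xbar 0 ⬝ᵥ xbar 0) + rb * a * ((1/α) * XS + α * WS) := by
        ring
end

section
/- Let C ∈ ℝ^{p×n}, A ∈ ℝ^{n×n}, V ∈ ℝ^{p×p} and Q ∈ ℝ^{n×n} positive definite. Let {y_t} ⊂ ℝᵖ, {x̄_t} ⊂ ℝⁿ, and {x̂_t} ⊂ ℝⁿ with x̂_0 = 0 be sequences, and write x̃_t = x̄_t − x̂_t, L_T = Σ_{t<T}‖y_t − Cx̂_t‖²_{V⁻¹}, V_T = Σ_{t<T}‖y_t − Cx̄_t‖²_{V⁻¹}, and W_T = Σ_{t<T}‖x̄_{t+1} − Ax̄_t‖². Fix r̄ > 0 and T ≥ 1, and suppose the H∞-type bound Σ_{t=0}^{T−1} ‖x̃_t‖²_{CᵀV⁻¹C} ≤ (√r̄ + 1)² ( ‖x̄_0‖² + V_T + σ̄(Q⁻¹) W_T ) holds. Then L_T ≤ (1 + (√r̄ + 1)²) V_T + (√r̄ + 1)² ‖x̄_0‖² + (√r̄ + 1)² σ̄(Q⁻¹) W_T + 2 (√r̄ + 1) √( V_T ( ‖x̄_0‖²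 + V_T + σ̄(Q⁻¹) W_T ) ). -/
open Matrix
open scoped Matrix.Norms.L2Operator

lemma dot_symm {p : ℕ} (M : Matrix (Fin p) (Fin p) ℝ) (hsym : Mᵀ = M)
    (a b : Fin p → ℝ) : a ⬝ᵥ M.mulVec b = b ⬝ᵥ M.mulVec a := by
  conv_lhs => rw [← hsym]
  rw [dotProduct_mulVec, vecMul_transpose, dotProduct_comm]

lemma quad_tri {p : ℕ} (M : Matrix (Fin p) (Fin p) ℝ) (hsym : Mᵀ = M)
    (hpsd : ∀ x, 0 ≤ x ⬝ᵥ M.mulVec x) (a b : Fin p → ℝ) (α : ℝ) (hα : 0 < α) :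
    (a + b) ⬝ᵥ M.mulVec (a + b) ≤
      (1 + 1/α) * (a ⬝ᵥ M.mulVec a) + (1 + α) * (b ⬝ᵥ M.mulVec b) := by
  have hX := dot_symm M hsym a b
  have key := hpsd (Real.sqrt α⁻¹ • a - Real.sqrt α • b)
  have h1 : Real.sqrt α⁻¹ * Real.sqrt α = 1 := by
    rw [← Real.sqrt_mul (by positivity), inv_mul_cancel₀ hα.ne', Real.sqrt_one]
  have h2 : Real.sqrt α⁻¹ * Real.sqrt α⁻¹ = 1/α := by
    rw [Real.mul_self_sqrt (by positivity), one_div]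
  have h3 : Real.sqrt α * Real.sqrt α = α := Real.mul_self_sqrt hα.le
  simp only [mulVec_add, mulVec_sub, mulVec_smul, dotProduct_add, dotProduct_sub,
    add_dotProduct, sub_dotProduct, smul_dotProduct, dotProduct_smul, smul_eq_mul] at key ⊢
  have e : Real.sqrt α⁻¹ * (Real.sqrt α⁻¹ * (a ⬝ᵥ M *ᵥ a) - Real.sqrt α * (b ⬝ᵥ M *ᵥ a))
      - Real.sqrt α * (Real.sqrt α⁻¹ * (a ⬝ᵥ M *ᵥ b) - Real.sqrt α * (b ⬝ᵥ M *ᵥ b))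
      = (1/α) * (a ⬝ᵥ M *ᵥ a) - (b ⬝ᵥ M *ᵥ a) - (a ⬝ᵥ M *ᵥ b) + α * (b ⬝ᵥ M *ᵥ b) := by
    linear_combination (a ⬝ᵥ M *ᵥ a) * h2 - (b ⬝ᵥ M *ᵥ a) * h1 - (a ⬝ᵥ M *ᵥ b) * h1
      + (b ⬝ᵥ M *ᵥ b) * h3
  rw [e] at key
  linarith

lemma alpha_opt (L v s : ℝ) (hv : 0 ≤ v) (hs : 0 ≤ s)
    (h : ∀ α : ℝ, 0 < α → L ≤ (1 + 1/α) * v + (1 + α) * s) :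
    L ≤ v + s + 2 * Real.sqrt (v * s) := by
  rcases eq_or_lt_of_le hs with rfl | hs'
  · simp only [mul_zero, Real.sqrt_zero, add_zero]
    refine le_of_forall_pos_le_add fun ε hε => ?_
    rcases eq_or_lt_of_le hv with rfl | hv'
    · have := h 1 one_pos; linarith
    · have h2 := h (v / ε) (by positivity)
      have e : (1 + 1/(v/ε)) * v = v + ε := by field_simp
      rw [e] at h2; linarith
  rcases eq_or_lt_of_le hv with rfl | hv'
  · simp only [zero_mul, Real.sqrt_zero, mul_zero, zero_add, add_zero]
    refine le_of_forall_pos_le_add fun ε hε => ?_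
    have h2 := h (ε / s) (by positivity)
    have e : (1 + ε/s) * s = s + ε := by field_simp
    rw [e] at h2; linarith
  · set α := Real.sqrt v / Real.sqrt s with hαdef
    have hsv : (0:ℝ) < Real.sqrt v := Real.sqrt_pos.2 hv'
    have hss : (0:ℝ) < Real.sqrt s := Real.sqrt_pos.2 hs'
    have hα : 0 < α := by positivity
    have h2 := h α hα
    have e1 : Real.sqrt v * Real.sqrt v = v := Real.mul_self_sqrt hv
    have e2 : Real.sqrt s * Real.sqrt s = s := Real.mul_self_sqrt hs
    have e3 : Real.sqrt (v * s) = Real.sqrt v * Real.sqrt s := Real.sqrt_mul hv s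
    have e : (1 + 1/α) * v + (1 + α) * s = v + s + 2 * (Real.sqrt v * Real.sqrt s) := by
      rw [hαdef]; field_simp; nlinarith [e1, e2]
    rw [e3]; linarith [h2, e.symm.le]

/-- Worst-case loss bound derived from the H∞ norm bound of the Kalman filter
(Corollary 1). Assuming `Σ_{t<T} ‖x̃_t‖²_{CᵀV⁻¹C} ≤ (√r̄+1)²(‖x̄_0‖² + V_T + σ̄(Q⁻¹) W_T)`,
one has `L_T ≤ (1 + (√r̄+1)²) V_T + (√r̄+1)² ‖x̄_0‖² + (√r̄+1)² σ̄(Q⁻¹) W_T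
+ 2(√r̄+1) √(V_T (‖x̄_0‖² + V_T + σ̄(Q⁻¹) W_T))`. -/
theorem hinf_derived_worst_case_bound {n p : ℕ}
    (C : Matrix (Fin p) (Fin n) ℝ)
    (A : Matrix (Fin n) (Fin n) ℝ)
    (V : Matrix (Fin p) (Fin p) ℝ) (hV : V.PosDef)
    (Q : Matrix (Fin n) (Fin n) ℝ) (hQ : Q.PosDef)
    (y : ℕ → Fin p → ℝ)
    (xbar : ℕ → Fin n → ℝ)
    (xhat : ℕ → Fin n → ℝ) (hx0 : xhat 0 = 0)
    (rbar : ℝ) (hrbar : 0 < rbar)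
    (T : ℕ) (hT : 1 ≤ T)
    (hHinf : (∑ t ∈ Finset.range T,
        (xbar t - xhat t) ⬝ᵥ (Cᵀ * V⁻¹ * C).mulVec (xbar t - xhat t)) ≤
      (Real.sqrt rbar + 1) ^ 2 *
        ((xbar 0 ⬝ᵥ xbar 0)
          + (∑ t ∈ Finset.range T,
              (y t - C.mulVec (xbar t)) ⬝ᵥ V⁻¹.mulVec (y t - C.mulVec (xbar t)))
          + sbar Q⁻¹ *
              ∑ t ∈ Finset.range T,
                (xbar (t + 1) - A.mulVec (xbar t)) ⬝ᵥ (xbar (t + 1) - A.mulVec (xbar t)))) :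
    (∑ t ∈ Finset.range T,
        (y t - C.mulVec (xhat t)) ⬝ᵥ V⁻¹.mulVec (y t - C.mulVec (xhat t))) ≤
      (1 + (Real.sqrt rbar + 1) ^ 2) *
          (∑ t ∈ Finset.range T,
            (y t - C.mulVec (xbar t)) ⬝ᵥ V⁻¹.mulVec (y t - C.mulVec (xbar t)))
        + (Real.sqrt rbar + 1) ^ 2 * (xbar 0 ⬝ᵥ xbar 0)
        + (Real.sqrt rbar + 1) ^ 2 * sbar Q⁻¹ *
            (∑ t ∈ Finset.range T,
              (xbar (t + 1) - A.mulVec (xbar t)) ⬝ᵥ (xbar (t + 1) - A.mulVec (xbar t)))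
        + 2 * (Real.sqrt rbar + 1) *
            Real.sqrt
              ((∑ t ∈ Finset.range T,
                  (y t - C.mulVec (xbar t)) ⬝ᵥ V⁻¹.mulVec (y t - C.mulVec (xbar t))) *
                ((xbar 0 ⬝ᵥ xbar 0)
                  + (∑ t ∈ Finset.range T,
                      (y t - C.mulVec (xbar t)) ⬝ᵥ V⁻¹.mulVec (y t - C.mulVec (xbar t)))
                  + sbar Q⁻¹ *
                      ∑ t ∈ Finset.range T,
                        (xbar (t + 1) - A.mulVec (xbar t)) ⬝ᵥ
                          (xbar (t + 1) - A.mulVec (xbar t)))) := by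
  have hM : (V⁻¹).PosDef := hV.inv
  have hsym : (V⁻¹)ᵀ = V⁻¹ := by
    have := hM.1
    have h : (V⁻¹).IsSymm := by simpa using this
    exact h
  have hpsd : ∀ x : Fin p → ℝ, 0 ≤ x ⬝ᵥ (V⁻¹).mulVec x := fun x => by
    simpa using hM.posSemidef.re_dotProduct_nonneg x
  -- abbreviations
  set ρ : ℝ := (Real.sqrt rbar + 1) ^ 2 with hρdef
  set VT : ℝ := ∑ t ∈ Finset.range T,
      (y t - C.mulVec (xbar t)) ⬝ᵥ V⁻¹.mulVec (y t - C.mulVec (xbar t)) with hVTdef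
  set ST : ℝ := ∑ t ∈ Finset.range T,
      (xbar t - xhat t) ⬝ᵥ (Cᵀ * V⁻¹ * C).mulVec (xbar t - xhat t) with hSTdef
  set WT : ℝ := ∑ t ∈ Finset.range T,
      (xbar (t + 1) - A.mulVec (xbar t)) ⬝ᵥ (xbar (t + 1) - A.mulVec (xbar t)) with hWTdef
  set LT : ℝ := ∑ t ∈ Finset.range T,
      (y t - C.mulVec (xhat t)) ⬝ᵥ V⁻¹.mulVec (y t - C.mulVec (xhat t)) with hLTdef
  set K : ℝ := (xbar 0 ⬝ᵥ xbar 0) + VT + sbar Q⁻¹ * WT with hKdef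
  have hρ0 : 0 ≤ ρ := sq_nonneg _
  have hsqrtρ : Real.sqrt ρ = Real.sqrt rbar + 1 := by
    rw [hρdef, Real.sqrt_sq (by positivity)]
  -- b-term rewrite
  have hbterm : ∀ d : Fin n → ℝ,
      (C.mulVec d) ⬝ᵥ (V⁻¹).mulVec (C.mulVec d) = d ⬝ᵥ (Cᵀ * V⁻¹ * C).mulVec d := by
    intro d
    rw [← mulVec_mulVec, ← mulVec_mulVec, dotProduct_mulVec d, vecMul_transpose]
  -- per-α bound
  have hmain : ∀ α : ℝ, 0 < α → LT ≤ (1 + 1/α) * VT + (1 + α) * ST := by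
    intro α hα
    rw [hLTdef, hVTdef, hSTdef, Finset.mul_sum, Finset.mul_sum, ← Finset.sum_add_distrib]
    refine Finset.sum_le_sum fun t _ => ?_
    have hdec : y t - C.mulVec (xhat t)
        = (y t - C.mulVec (xbar t)) + C.mulVec (xbar t - xhat t) := by
      rw [mulVec_sub]; abel
    rw [hdec, ← hbterm (xbar t - xhat t)]
    exact quad_tri _ hsym hpsd _ _ α hα
  have hVT0 : 0 ≤ VT := Finset.sum_nonneg fun t _ => hpsd _
  have hWT0 : 0 ≤ WT := Finset.sum_nonneg fun t _ =>
    Finset.sum_nonneg fun i _ => mul_self_nonneg _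
  have hx00 : 0 ≤ xbar 0 ⬝ᵥ xbar 0 := Finset.sum_nonneg fun i _ => mul_self_nonneg _
  have hs0 : 0 ≤ sbar Q⁻¹ := norm_nonneg _
  have hK0 : 0 ≤ K := by rw [hKdef]; positivity
  have hρK0 : 0 ≤ ρ * K := mul_nonneg hρ0 hK0
  have hmain2 : ∀ α : ℝ, 0 < α → LT ≤ (1 + 1/α) * VT + (1 + α) * (ρ * K) := by
    intro α hα
    refine (hmain α hα).trans ?_
    have : ST ≤ ρ * K := hHinf
    exact add_le_add_right (mul_le_mul_of_nonneg_left this (by linarith)) _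
  have hfin := alpha_opt LT VT (ρ * K) hVT0 hρK0 hmain2
  have hsqrt : Real.sqrt (VT * (ρ * K)) = (Real.sqrt rbar + 1) * Real.sqrt (VT * K) := by
    rw [show VT * (ρ * K) = ρ * (VT * K) by ring, Real.sqrt_mul hρ0, hsqrtρ]
  rw [hsqrt] at hfin
  rw [hKdef] at hfin
  linarith [hfin]
end
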